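/- Let F be a field and k : Φ0 → Fˣ a W0-invariant function. Let J ⊊ {0,…,r} and define η_J : Φ0+ → {−1, 0, 1} by η_J(α) = −1 if α vanishes identically on C^J, η_J(α) = 1 if α is identically equal to 1 on C^J, and η_J(α) = 0 if α(C^J) ⊆ (0,1). Then: for every i ∈ J ∩ {1,…,r}, ∏_{α ∈ Φ0+} k(α)^{η_J(α)·α(α_i∨)} = k(α_i)^{−2}; and if 0 ∈ J, then ∏_{α ∈ Φ0+} k(α)^{η_J(α)·α(φ∨)} = k(φ)². (Equivalently, for any subgroup Λ ⊆ E with Q∨ ⊆ Λ and α(Λ) ⊆ ℤ for all α ∈ Φ0, the character 𝔰_J ∈ Hom(Λ, Fˣ), λ ↦ ∏_{α∈Φ0+} k(α)^{η_J(α)·α(λ)}, satisfies 𝔰_J^{Dα_j∨} = k_{Dα_j}^{−2} for all j ∈ J, where Dα_i = α_i and Dα_0 = −φ.) -/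

import Mathlib

open scoped InnerProductSpace Classical

noncomputable section

namespace SSV

variable {E : Type*} [NormedAddCommGroup E] [InnerProductSpace ℝ E]

/-- The coroot `α∨ = (2/‖α‖²)·α` of `α ∈ E`, under the identification of `E*` with `E`
via the inner product (a root `α` acts on `E` as the linear functional `y ↦ ⟪α,y⟫`). -/
def cv (α : E) : E := (2 / ⟪α, α⟫_ℝ) • α

/-- The linear functional `y ↦ ⟪α∨, y⟫ = 2⟪α,y⟫/‖α‖²`. -/
def rootForm (α : E) : E →ₗ[ℝ] ℝ where
  toFun y := 2 / ⟪α, α⟫_ℝ * ⟪α, y⟫_ℝ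
  map_add' y z := by rw [inner_add_right]; ring
  map_smul' c y := by
    simp only [RingHom.id_apply, smul_eq_mul, real_inner_smul_right]
    ring

/-- The orthogonal reflection `s_α : y ↦ y − α(y)·α∨` in the hyperplane `α = 0`. -/
def lrefl (α : E) : E ≃ₗ[ℝ] E :=
  if h : ⟪α, α⟫_ℝ = 0 then LinearEquiv.refl ℝ E
  else
    Module.reflection (f := rootForm α) (x := α)
      (by simp only [rootForm, LinearMap.coe_mk, AddHom.coe_mk]; field_simp)

/-- The affine reflection `s_a : y ↦ y − a(y)·α∨` associated to the affine root
`a = (α, c)`, i.e. to the affine function `y ↦ α(y) + c = ⟪α,y⟫ + c` on `E`. -/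
def aRefl (α : E) (c : ℝ) : E ≃ᵃ[ℝ] E :=
  (lrefl α).toAffineEquiv.trans (AffineEquiv.constVAdd ℝ E (-(c • cv α)))

/-- The translation `τ(μ) : y ↦ y + μ`. -/
def tr (μ : E) : E ≃ᵃ[ℝ] E := AffineEquiv.constVAdd ℝ E μ

/-- `η = χ_{ℤ_{>0}} − χ_{ℤ_{≤0}} : ℝ → {−1,0,1}`. -/
def eta (x : ℝ) : ℤ :=
  if ∃ n : ℤ, x = (n : ℝ) then (if 0 < x then 1 else -1) else 0

/-- `sgn(ℓ) = ℓ/|ℓ|` for `ℓ ≠ 0`, and `sgn(0) = 1`. -/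
def sgnz (l : ℤ) : ℤ := if 0 ≤ l then 1 else -1

/-- The alternating word `j j' j j' ⋯` of length `m`. -/
def altList {n : ℕ} (j j' : Fin n) (m : ℕ) : List (Fin n) :=
  (List.range m).map fun s => if s % 2 = 0 then j else j'

/-- Evaluation of the affine function `a = (α, c)` at `y`: `a(y) = α(y) + c`. -/
def aval (a : E × ℝ) (y : E) : ℝ := ⟪a.1, y⟫_ℝ + a.2

/-- The contragredient action of `w` on affine roots: `(w·a)(y) = a(w⁻¹·y)`. -/
def wact (w : E ≃ᵃ[ℝ] E) (a : E × ℝ) : E × ℝ :=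
  (w.linear a.1, a.2 - ⟪w.linear a.1, w 0⟫_ℝ)

/-- The relation `y ≺_α z`. -/
def precA (α : E) (y z : E) : Prop :=
  (∃ l : ℤ, y = aRefl α (l : ℝ) z) ∧
    (|⟪α, y⟫_ℝ| < |⟪α, z⟫_ℝ| ∨ (⟪α, y⟫_ℝ = -⟪α, z⟫_ℝ ∧ 0 < ⟪α, y⟫_ℝ))

/-- The data of a reduced irreducible finite root system `Φ0` realised in `E* ≅ E`,
normalised so that long roots have squared length `2/m²`, together with a choice of
positive roots, simple roots `α_1, …, α_r`, and the corresponding highest root `φ`. -/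
structure Data (E : Type*) [NormedAddCommGroup E] [InnerProductSpace ℝ E] where
  r : ℕ
  r_pos : 0 < r
  m : ℕ
  m_pos : 0 < m
  Φ0 : Finset E
  pos : Finset E
  simple : Fin r → E
  hroot : E
  root_ne_zero : ∀ α ∈ Φ0, α ≠ 0
  root_neg_mem : ∀ α ∈ Φ0, -α ∈ Φ0
  root_reduced : ∀ α ∈ Φ0, ∀ c : ℝ, c • α ∈ Φ0 → c = 1 ∨ c = -1
  root_refl_mem : ∀ α ∈ Φ0, ∀ β ∈ Φ0, aRefl α 0 β ∈ Φ0
  root_crystal : ∀ α ∈ Φ0, ∀ β ∈ Φ0, ∃ n : ℤ, ⟪cv β, α⟫_ℝ = (n : ℝ)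
  root_irred : ∀ A B : Set E, (Φ0 : Set E) = A ∪ B → A.Nonempty → B.Nonempty →
    (∀ a ∈ A, ∀ b ∈ B, ⟪a, b⟫_ℝ = 0) → False
  root_norm_le : ∀ α ∈ Φ0, ⟪α, α⟫_ℝ ≤ 2 / (m : ℝ) ^ 2
  root_norm_int : ∀ α ∈ Φ0, ∃ n : ℤ, (n : ℝ) * ⟪α, α⟫_ℝ = 2
  pos_subset : pos ⊆ Φ0
  pos_dichotomy : ∀ α ∈ Φ0, (α ∈ pos ∧ -α ∉ pos) ∨ (α ∉ pos ∧ -α ∈ pos)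
  simple_mem_pos : ∀ i, simple i ∈ pos
  simple_indep : LinearIndependent ℝ simple
  pos_nat_comb : ∀ α ∈ pos, ∃ n : Fin r → ℕ, α = ∑ i, (n i : ℝ) • simple i
  hroot_mem_pos : hroot ∈ pos
  hroot_long : ⟪hroot, hroot⟫_ℝ = 2 / (m : ℝ) ^ 2
  hroot_highest : ∀ α ∈ Φ0, ∃ n : Fin r → ℕ, hroot - α = ∑ i, (n i : ℝ) • simple i

namespace Data

variable (D : Data E)

/-- The coroot lattice `Q∨`. -/
def Qv : AddSubgroup E := AddSubgroup.closure (cv '' (D.Φ0 : Set E))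

/-- The simple affine roots `α_0 = (−φ, 1)` and `α_i = (α_i, 0)` (`1 ≤ i ≤ r`), as pairs
`(gradient, constant term)`. -/
def asimple : Fin (D.r + 1) → E × ℝ :=
  Fin.cases (-D.hroot, (1 : ℝ)) fun i => (D.simple i, (0 : ℝ))

/-- The simple reflections `s_0, …, s_r` of the affine Weyl group. -/
def sgen (j : Fin (D.r + 1)) : E ≃ᵃ[ℝ] E := aRefl (D.asimple j).1 (D.asimple j).2

/-- `a = (α, c)` is an affine root iff `α ∈ Φ0` and `c ∈ ℤ`. -/
def IsAffRoot (a : E × ℝ) : Prop := a.1 ∈ D.Φ0 ∧ ∃ n : ℤ, a.2 = (n : ℝ)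

/-- `a` is a positive affine root. -/
def IsPosAff (a : E × ℝ) : Prop :=
  D.IsAffRoot a ∧ (0 < a.2 ∨ (a.2 = 0 ∧ a.1 ∈ D.pos))

/-- The set of reflections `s_α`, `α ∈ Φ0`. -/
def reflSet : Set (E ≃ᵃ[ℝ] E) := {g | ∃ α ∈ D.Φ0, g = aRefl α 0}

/-- The set of translations `τ(μ)`, `μ ∈ Q∨`. -/
def trSet : Set (E ≃ᵃ[ℝ] E) := {g | ∃ μ ∈ D.Qv, g = tr μ}

/-- The finite Weyl group `W0`, generated by the reflections `s_α`. -/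
def W0 : Subgroup (E ≃ᵃ[ℝ] E) := Subgroup.closure D.reflSet

/-- The affine Weyl group `W = W0 ⋉ Q∨`. -/
def W : Subgroup (E ≃ᵃ[ℝ] E) := Subgroup.closure (D.reflSet ∪ D.trSet)

/-- The inversion set `Π(w) = Φ+ ∩ w⁻¹Φ−`. -/
def PiSet (w : E ≃ᵃ[ℝ] E) : Set (E × ℝ) :=
  {a | D.IsPosAff a ∧ ¬D.IsPosAff (wact w a)}

/-- The length function `ℓ(w) := #Π(w)`. -/
def len (w : E ≃ᵃ[ℝ] E) : ℕ := (D.PiSet w).ncard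

/-- The open fundamental alcove `C₊`. -/
def Cp : Set E := {y | ∀ α ∈ D.pos, 0 < ⟪α, y⟫_ℝ ∧ ⟪α, y⟫_ℝ < 1}

/-- The closed fundamental alcove `C̄₊`. -/
def Cbar : Set E := closure D.Cp

/-- The face `C^J` of `C̄₊` (for `J ⊊ {0,…,r}`). -/
def CJ (J : Set (Fin (D.r + 1))) : Set E :=
  {c | c ∈ D.Cbar ∧ ∀ j, aval (D.asimple j) c = 0 ↔ j ∈ J}

/-- The orbit `O_c = W·c`. -/
def Orb (c : E) : Set E := {y | ∃ w ∈ D.W, w c = y}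

/-- The unique point `c_y ∈ C̄₊` in the `W`-orbit of `y`. -/
def cpt (y : E) : E :=
  if h : ∃ c, c ∈ D.Cbar ∧ ∃ w ∈ D.W, w c = y then h.choose else 0

/-- The unique shortest element `w_y ∈ W` with `w_y · c_y = y`. -/
def wmin (y : E) : E ≃ᵃ[ℝ] E :=
  if h : ∃ w, (w ∈ D.W ∧ w (D.cpt y) = y) ∧
      ∀ u, u ∈ D.W → u (D.cpt y) = y → D.len w ≤ D.len u then
    h.choose
  else 1

/-- Reflections of the Coxeter system `(W, {s_0, …, s_r})`. -/
def IsCoxRefl (g : E ≃ᵃ[ℝ] E) : Prop := ∃ w ∈ D.W, ∃ j, g = w * D.sgen j * w⁻¹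

/-- A single step in the Bruhat order. -/
def bstep (u v : E ≃ᵃ[ℝ] E) : Prop :=
  (∃ g, D.IsCoxRefl g ∧ v = g * u) ∧ D.len u < D.len v

/-- The Bruhat order `≤_B` of `(W, {s_0, …, s_r})`. -/
def bruhatLE : (E ≃ᵃ[ℝ] E) → (E ≃ᵃ[ℝ] E) → Prop := Relation.ReflTransGen D.bstep

/-- The strict Bruhat order `<_B`. -/
def bruhatLT (u v : E ≃ᵃ[ℝ] E) : Prop := D.bruhatLE u v ∧ u ≠ v

/-- The parabolic Bruhat order `≤` on `E`: `y ≤ z` iff `y ∈ W·z` and `w_y ≤_B w_z`. -/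
def paraLE (y z : E) : Prop :=
  (∃ w ∈ D.W, w z = y) ∧ D.bruhatLE (D.wmin y) (D.wmin z)

/-- The strict parabolic Bruhat order `<` on `E`. -/
def paraLT (y z : E) : Prop := D.paraLE y z ∧ y ≠ z

/-- The relation `≺`, the transitive closure of the `≺_α` (`α ∈ Φ0+`). -/
def prec : E → E → Prop :=
  Relation.TransGen fun y z => ∃ α ∈ D.pos, precA α y z

/-- The relation `⪯`. -/
def precLE (y z : E) : Prop := D.prec y z ∨ y = z

/-- The parabolic subgroup `W_J` of `W`. -/
def WJ (J : Set (Fin (D.r + 1))) : Subgroup (E ≃ᵃ[ℝ] E) :=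
  Subgroup.closure {g | ∃ j ∈ J, g = D.sgen j}

/-- The set `W^J` of minimal-length representatives of the cosets `W/W_J`. -/
def WminJ (J : Set (Fin (D.r + 1))) : Set (E ≃ᵃ[ℝ] E) :=
  {w | w ∈ D.W ∧ ∀ u ∈ D.WJ J, D.len w ≤ D.len (w * u)}

/-- Dominant elements: `α(μ) ≥ 0` for all `α ∈ Φ0+`. -/
def IsDom (μ : E) : Prop := ∀ α ∈ D.pos, 0 ≤ ⟪α, μ⟫_ℝ

/-- `Π0(v) = Φ0+ ∩ v⁻¹Φ0−` for `v ∈ W0`. -/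
def Pi0 (v : E ≃ᵃ[ℝ] E) : Finset E := D.pos.filter fun α => -(v.linear α) ∈ D.pos

/-- `χ = χ₊ − χ₋ : Φ0 → {±1}`. -/
def chi (α : E) : ℤ := if α ∈ D.pos then 1 else -1

end Data

/-- The character `𝔰_y : μ ↦ ∏_{α ∈ Φ0+} k_α^{η(α(y))·α(μ)}` (evaluated at points `μ` where
all `α(μ)` are integers, e.g. on a lattice `Λ ∈ 𝓛`). -/
def sweight {F : Type*} [Field F] (D : Data E) (k : E → Fˣ) (y μ : E) : Fˣ :=
  ∏ α ∈ D.pos, k α ^ (eta ⟪α, y⟫_ℝ * ⌊⟪α, μ⟫_ℝ⌋)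

/-- The action of `w ∈ W` on characters of `Q∨`: for `w = τ(ν)v`,
`(w·t)(μ) = q^{⟪ν,μ⟫}·t(v⁻¹μ)`. -/
def charAct {F : Type*} [Field F] (q : Fˣ) (w : E ≃ᵃ[ℝ] E) (t : E → Fˣ) : E → Fˣ :=
  fun μ => q ^ ⌊⟪w 0, μ⟫_ℝ⌋ * t (w.linear.symm μ)

/-- `t` defines a multiplicative character of `Q∨`, i.e. an element of `T = Hom(Q∨, Fˣ)`. -/
def IsChar {F : Type*} [Field F] (D : Data E) (t : E → Fˣ) : Prop :=
  ∀ μ ∈ D.Qv, ∀ ν ∈ D.Qv, t (μ + ν) = t μ * t ν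

/-- `q_α := q^{2/‖α‖²}`. -/
def qroot {F : Type*} [Field F] (q : Fˣ) (α : E) : Fˣ := q ^ ⌊2 / ⟪α, α⟫_ℝ⌋

/-- Membership in `T_J`: `t ∈ T` with `t^{α_i∨} = 1` for `i ∈ J ∩ {1,…,r}`, and
`q_φ·t^{−φ∨} = 1` if `0 ∈ J`. -/
def InTJ {F : Type*} [Field F] (D : Data E) (q : Fˣ) (J : Set (Fin (D.r + 1)))
    (t : E → Fˣ) : Prop :=
  IsChar D t ∧ (∀ i : Fin D.r, i.succ ∈ J → t (cv (D.simple i)) = 1) ∧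
    ((0 : Fin (D.r + 1)) ∈ J → qroot q D.hroot * t (-cv D.hroot) = 1)

/-- `κ_v(y) = ∏_{α ∈ Π0(v)} k_α^{−η(α(y))}`. -/
def kappa {F : Type*} [Field F] (D : Data E) (k : E → Fˣ) (v : E ≃ᵃ[ℝ] E) (y : E) : Fˣ :=
  ∏ α ∈ D.Pi0 v, k α ^ (-eta ⟪α, y⟫_ℝ)

/-- The (quasi-)monomial `x^y`, as an element of `⊕_{z ∈ E} F x^z`. -/
def xmono (F : Type*) [Field F] (y : E) : E →₀ F := Finsupp.single y 1

/-- The multiplication operator `π(x^μ) : x^y ↦ x^{y+μ}`. -/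
def xop (F : Type*) [Field F] (μ : E) : Module.End F (E →₀ F) :=
  Finsupp.lmapDomain F F (· + μ)

/-- The truncated divided difference `∇_i(x^y)` in its explicit form: with `n = ⌊α(y)⌋`,
`−(x^{y−α∨} + ⋯ + x^{y−nα∨})` if `n ≥ 1`, `0` if `n = 0`, and
`x^y + x^{y+α∨} + ⋯ + x^{y+(−n−1)α∨}` if `n ≤ −1`. -/
def nablaS (F : Type*) [Field F] (α y : E) : E →₀ F :=
  if 1 ≤ ⌊⟪α, y⟫_ℝ⌋ then
    -∑ s ∈ Finset.Icc (1 : ℤ) ⌊⟪α, y⟫_ℝ⌋, Finsupp.single (y - (s : ℝ) • cv α) (1 : F)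
  else
    ∑ s ∈ Finset.Icc (0 : ℤ) (-⌊⟪α, y⟫_ℝ⌋ - 1), Finsupp.single (y + (s : ℝ) • cv α) (1 : F)

/-- The truncated divided difference `∇_0(x^y)` in its explicit form: with `n = ⌊−φ(y)⌋`,
`−(q_φ^{−1}x^{y+φ∨} + ⋯ + q_φ^{−n}x^{y+nφ∨})` if `n ≥ 1`, `0` if `n = 0`, and
`x^y + q_φ x^{y−φ∨} + ⋯ + q_φ^{−n−1}x^{y+(n+1)φ∨}` if `n ≤ −1`. -/
def nabla0 {F : Type*} [Field F] (D : Data E) (q : Fˣ) (y : E) : E →₀ F :=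
  if 1 ≤ ⌊-⟪D.hroot, y⟫_ℝ⌋ then
    -∑ s ∈ Finset.Icc (1 : ℤ) ⌊-⟪D.hroot, y⟫_ℝ⌋,
      (((qroot q D.hroot : Fˣ) : F) ^ (-s)) • Finsupp.single (y + (s : ℝ) • cv D.hroot) (1 : F)
  else
    ∑ s ∈ Finset.Icc (0 : ℤ) (-⌊-⟪D.hroot, y⟫_ℝ⌋ - 1),
      (((qroot q D.hroot : Fˣ) : F) ^ s) • Finsupp.single (y - (s : ℝ) • cv D.hroot) (1 : F)

/-- `k_j := k_{α_j}` (`0 ≤ j ≤ r`), with `k_0 = k_φ`. -/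
def kgen {F : Type*} [Field F] (D : Data E) (k : E → Fˣ) : Fin (D.r + 1) → Fˣ :=
  Fin.cases (k D.hroot) fun i => k (D.simple i)

/-- The image of the monomial `x^y` under the truncated Demazure–Lusztig operator `π(T_j)`:
`π(T_i)x^y = k_i^{χ_ℤ(α_i(y))}x^{s_i y} + (k_i − k_i^{−1})∇_i(x^y)` for `1 ≤ i ≤ r`, and
`π(T_0)x^y = k_0^{χ_ℤ(α_0(y))}𝔱_y^{φ∨}x^{s_φ y} + (k_0 − k_0^{−1})∇_0(x^y)`. -/
def Tfun {F : Type*} [Field F] (D : Data E) (q : Fˣ) (k t : E → Fˣ) :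
    Fin (D.r + 1) → E → E →₀ F :=
  Fin.cases
    (fun y =>
      ((if ∃ n : ℤ, aval (D.asimple 0) y = (n : ℝ) then ((k D.hroot : Fˣ) : F) else 1) *
          ((charAct q (D.wmin y) t (cv D.hroot) : Fˣ) : F)) •
          Finsupp.single (aRefl D.hroot 0 y) (1 : F) +
        (((k D.hroot : Fˣ) : F) - (((k D.hroot)⁻¹ : Fˣ) : F)) • nabla0 D q y)
    fun i y =>
      (if ∃ n : ℤ, ⟪D.simple i, y⟫_ℝ = (n : ℝ) then ((k (D.simple i) : Fˣ) : F) else 1) •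
          Finsupp.single (aRefl (D.simple i) 0 y) (1 : F) +
        (((k (D.simple i) : Fˣ) : F) - (((k (D.simple i))⁻¹ : Fˣ) : F)) • nablaS F (D.simple i) y

/-- The truncated Demazure–Lusztig operator `π(T_j)` on `⊕_{y ∈ E} F x^y`. -/
def Top {F : Type*} [Field F] (D : Data E) (q : Fˣ) (k t : E → Fˣ) (j : Fin (D.r + 1)) :
    Module.End F (E →₀ F) :=
  Finsupp.linearCombination F (Tfun D q k t j)

/-- `π(((1 − x^{−α(μ)α∨})/(1 − x^{α∨}))·x^μ)` applied to `x^y`: the finite geometric sum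
appearing in the cross relation for `T_i`. -/
def crossS (F : Type*) [Field F] (α μ y : E) : E →₀ F :=
  if 1 ≤ ⌊⟪α, μ⟫_ℝ⌋ then
    -∑ s ∈ Finset.Icc (1 : ℤ) ⌊⟪α, μ⟫_ℝ⌋, Finsupp.single (y + μ - (s : ℝ) • cv α) (1 : F)
  else
    ∑ s ∈ Finset.Icc (0 : ℤ) (-⌊⟪α, μ⟫_ℝ⌋ - 1), Finsupp.single (y + μ + (s : ℝ) • cv α) (1 : F)

/-- `π(((1 − (q_φ x^{−φ∨})^{φ(μ)})/(1 − q_φ x^{−φ∨}))·x^μ)` applied to `x^y`: the finite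
geometric sum appearing in the cross relation for `T_0`. -/
def cross0 {F : Type*} [Field F] (D : Data E) (q : Fˣ) (μ y : E) : E →₀ F :=
  if 0 ≤ ⌊⟪D.hroot, μ⟫_ℝ⌋ then
    ∑ s ∈ Finset.Icc (0 : ℤ) (⌊⟪D.hroot, μ⟫_ℝ⌋ - 1),
      (((qroot q D.hroot : Fˣ) : F) ^ s) • Finsupp.single (y + μ - (s : ℝ) • cv D.hroot) (1 : F)
  else
    -∑ s ∈ Finset.Icc (1 : ℤ) (-⌊⟪D.hroot, μ⟫_ℝ⌋),
      (((qroot q D.hroot : Fˣ) : F) ^ (-s)) • Finsupp.single (y + μ + (s : ℝ) • cv D.hroot) (1 : F)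

/-- The quasi-monomial `x^y` in the model `Q^{(c)} ⊆ (E → Q)` of `Q ⊗_P P^{(c)}`:
`x^y` is the function `z ↦ x^{y−z}` supported on `y + Q∨`. -/
def xiQ {Q : Type*} [Field Q] (D : Data E) (mono : E → Q) (y : E) : E → Q :=
  fun z => if z - y ∈ D.Qv then mono (y - z) else 0

/-- Membership in the model `Q^{(c)} ⊆ (E → Q)` of `Q ⊗_P P^{(c)}`: functions supported on
`O_c` satisfying the covariance `ξ(z + ν) = x^{−ν}·ξ(z)` (`ν ∈ Q∨`). -/
def IsQc {Q : Type*} [Field Q] (D : Data E) (mono : E → Q) (c : E) (ξ : E → Q) : Prop :=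
  (∀ z, z ∉ D.Orb c → ξ z = 0) ∧
    ∀ z ∈ D.Orb c, ∀ ν ∈ D.Qv, ξ (z + ν) = (mono ν)⁻¹ * ξ z

/-- `x^{α_0∨} = q_φ x^{−φ∨}` as an element of `Q`. -/
def xroot0 {F Q : Type*} [Field F] [Field Q] (D : Data E) (ι : F →+* Q) (q : Fˣ)
    (mono : E → Q) : Q :=
  ι ((qroot q D.hroot : Fˣ) : F) * mono (-cv D.hroot)

/-- The right-hand side of the defining formula for `σ(s_j)(x^y)`:
`(k_j^{χ_ℤ(α_j(y))}(x^{α_j∨} − 1)/(k_j x^{α_j∨} − k_j^{−1}))·s_{j,𝔱}x^y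
 + ((k_j − k_j^{−1})/(k_j x^{α_j∨} − k_j^{−1}))·x^{y − ⌊Dα_j(y)⌋α_j∨}`. -/
def sigmaFormula {F Q : Type*} [Field F] [Field Q] (D : Data E) (ι : F →+* Q) (q : Fˣ)
    (k t : E → Fˣ) (mono : E → Q) : Fin (D.r + 1) → E → E → Q :=
  Fin.cases
    (fun y =>
      (((if ∃ n : ℤ, aval (D.asimple 0) y = (n : ℝ) then ι ((k D.hroot : Fˣ) : F) else 1) *
            (xroot0 D ι q mono - 1)) /
          (ι ((k D.hroot : Fˣ) : F) * xroot0 D ι q mono - ι (((k D.hroot)⁻¹ : Fˣ) : F))) •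
          (ι ((charAct q (D.wmin y) t (cv D.hroot) : Fˣ) : F) •
            xiQ D mono (aRefl D.hroot 0 y)) +
        ((ι ((k D.hroot : Fˣ) : F) - ι (((k D.hroot)⁻¹ : Fˣ) : F)) /
          (ι ((k D.hroot : Fˣ) : F) * xroot0 D ι q mono - ι (((k D.hroot)⁻¹ : Fˣ) : F))) •
          (ι (((qroot q D.hroot ^ (-⌊-⟪D.hroot, y⟫_ℝ⌋) : Fˣ) : F)) •
            xiQ D mono (y + (⌊-⟪D.hroot, y⟫_ℝ⌋ : ℝ) • cv D.hroot)))
    fun i y =>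
      (((if ∃ n : ℤ, ⟪D.simple i, y⟫_ℝ = (n : ℝ) then ι ((k (D.simple i) : Fˣ) : F) else 1) *
            (mono (cv (D.simple i)) - 1)) /
          (ι ((k (D.simple i) : Fˣ) : F) * mono (cv (D.simple i)) -
            ι (((k (D.simple i))⁻¹ : Fˣ) : F))) •
          xiQ D mono (aRefl (D.simple i) 0 y) +
        ((ι ((k (D.simple i) : Fˣ) : F) - ι (((k (D.simple i))⁻¹ : Fˣ) : F)) /
          (ι ((k (D.simple i) : Fˣ) : F) * mono (cv (D.simple i)) -
            ι (((k (D.simple i))⁻¹ : Fˣ) : F))) •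
          xiQ D mono (y - (⌊⟪D.simple i, y⟫_ℝ⌋ : ℝ) • cv (D.simple i))

end SSV

/-!
For `i ∈ J`, the simple reflection `s_i` permutes `Φ0+ \ {α_i}`, preserves `k` (by
`W0`-invariance) and `η_J` (as `α_i` vanishes on `C^J`, `s_i α` and `α` agree there), and negates
`α(α_i∨)`; so these factors cancel in pairs and only `k(α_i)^{η_J(α_i)·2} = k(α_i)^{-2}` survives.
For `0 ∈ J`, `φ ≡ 1` on `C^J`, and every positive root `α ≠ φ` has `α(φ∨) ∈ {0, 1}` because `φ` is
dominant and long. Those with `α(φ∨) = 1` pair off with `φ - α = -s_φ α`, which has the same `k`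
and the opposite `η_J`, leaving `k(φ)^{η_J(φ)·2} = k(φ)^2`.

That `η_J` is determined at all rests on the shape of `C^J`: writing `α` and `φ - α` as
nonnegative combinations of simple roots, whether `α` is `0` (resp. `1`) at a point of `C^J`
depends only on `J`.
-/

namespace SSV

variable {E : Type*} [NormedAddCommGroup E] [InnerProductSpace ℝ E]

lemma inner_cv_self {γ : E} (hγ : γ ≠ 0) : ⟪γ, cv γ⟫_ℝ = 2 := by
  rw [cv, real_inner_smul_right, div_mul_cancel₀ _ (inner_self_ne_zero.mpr hγ)]

lemma inner_cv (β γ : E) : ⟪β, cv γ⟫_ℝ = 2 * ⟪β, γ⟫_ℝ / ⟪γ, γ⟫_ℝ := by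
  rw [cv, real_inner_smul_right]
  ring

lemma lrefl_apply (γ β : E) : lrefl γ β = β - ⟪β, cv γ⟫_ℝ • γ := by
  by_cases h : ⟪γ, γ⟫_ℝ = 0
  · simp [lrefl, inner_self_eq_zero.mp h]
  · rw [lrefl, dif_neg h, Module.reflection_apply, cv, real_inner_smul_right]
    change β - (2 / ⟪γ, γ⟫_ℝ * ⟪γ, β⟫_ℝ) • γ = _
    rw [real_inner_comm β γ]

lemma lrefl_lrefl (γ β : E) : lrefl γ (lrefl γ β) = β := by
  unfold lrefl
  split_ifs
  · rfl
  · exact Module.involutive_reflection _ β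

lemma lrefl_self {γ : E} (hγ : γ ≠ 0) : lrefl γ γ = -γ := by
  rw [lrefl_apply, inner_cv_self hγ, two_smul, sub_add_cancel_left]

lemma inner_lrefl_cv {γ : E} (hγ : γ ≠ 0) (β : E) :
    ⟪lrefl γ β, cv γ⟫_ℝ = -⟪β, cv γ⟫_ℝ := by
  rw [lrefl_apply, inner_sub_left, real_inner_smul_left, inner_cv_self hγ]
  ring

lemma inner_lrefl_of_inner_eq_zero {γ c : E} (β : E) (h : ⟪γ, c⟫_ℝ = 0) :
    ⟪lrefl γ β, c⟫_ℝ = ⟪β, c⟫_ℝ := by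
  rw [lrefl_apply, inner_sub_left, real_inner_smul_left, h, mul_zero, sub_zero]

lemma _root_.LinearIndependent.eq_single_of_sum_eq_smul {ι : Type*} [Fintype ι]
    [DecidableEq ι] {v : ι → E} (hv : LinearIndependent ℝ v) {c : ι → ℝ} {i : ι} {t : ℝ}
    (h : ∑ l, c l • v l = t • v i) : c = Pi.single i t := by
  have h0 := Fintype.linearIndependent_iff.mp hv (c - Pi.single i t) (by
    simp [sub_smul, Finset.sum_sub_distrib, h, Pi.single_apply, ite_smul])
  funext l
  simpa [sub_eq_zero] using h0 l

lemma real_inner_le_inner_self_of_inner_self_le {x y : E} (h : ⟪x, x⟫_ℝ ≤ ⟪y, y⟫_ℝ) :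
    ⟪x, y⟫_ℝ ≤ ⟪y, y⟫_ℝ ∧ (⟪x, y⟫_ℝ = ⟪y, y⟫_ℝ → x = y) := by
  have hsub : ⟪x - y, x - y⟫_ℝ = ⟪x, x⟫_ℝ - 2 * ⟪x, y⟫_ℝ + ⟪y, y⟫_ℝ := by
    rw [inner_sub_left, inner_sub_right, inner_sub_right, real_inner_comm y x]
    ring
  have hnn : 0 ≤ ⟪x - y, x - y⟫_ℝ := real_inner_self_nonneg
  refine ⟨by linarith, fun he => sub_eq_zero.mp (inner_self_eq_zero (𝕜 := ℝ) |>.mp ?_)⟩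
  exact le_antisymm (by linarith) hnn

namespace Data

variable (D : Data E) {J : Set (Fin (D.r + 1))} {α β γ c c' : E}

lemma lrefl_mem (hγ : γ ∈ D.Φ0) (hβ : β ∈ D.Φ0) : lrefl γ β ∈ D.Φ0 := by
  simpa [aRefl] using D.root_refl_mem γ hγ β hβ

lemma exists_inner_cv_eq_intCast (hα : α ∈ D.Φ0) (hγ : γ ∈ D.Φ0) :
    ∃ n : ℤ, ⟪α, cv γ⟫_ℝ = n := by
  simpa only [real_inner_comm] using D.root_crystal α hα γ hγ

lemma aval_asimple_succ (i : Fin D.r) (c : E) :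
    aval (D.asimple i.succ) c = ⟪D.simple i, c⟫_ℝ := by
  simp [aval, asimple]

lemma aval_asimple_zero (c : E) : aval (D.asimple 0) c = 1 - ⟪D.hroot, c⟫_ℝ := by
  simp only [aval, asimple, Fin.cases_zero, inner_neg_left]
  ring

lemma inner_mem_Icc_of_mem_Cbar (hα : α ∈ D.pos) (hc : c ∈ D.Cbar) :
    ⟪α, c⟫_ℝ ∈ Set.Icc (0 : ℝ) 1 :=
  closure_minimal (s := D.Cp) (t := (fun y => ⟪α, y⟫_ℝ) ⁻¹' Set.Icc 0 1)
    (fun _ hy => Set.Ioo_subset_Icc_self (hy α hα))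
    (isClosed_Icc.preimage (continuous_const.inner continuous_id)) hc

lemma inner_simple_eq_zero_iff (hc : c ∈ D.CJ J) (i : Fin D.r) :
    ⟪D.simple i, c⟫_ℝ = 0 ↔ i.succ ∈ J := by
  rw [← hc.2 i.succ, aval_asimple_succ]

lemma inner_hroot_eq_one_iff (hc : c ∈ D.CJ J) : ⟪D.hroot, c⟫_ℝ = 1 ↔ 0 ∈ J := by
  rw [← hc.2 0, aval_asimple_zero, sub_eq_zero, eq_comm]

lemma inner_sum_simple_eq (n : Fin D.r → ℕ) (c : E) :
    ⟪∑ j, (n j : ℝ) • D.simple j, c⟫_ℝ = ∑ j, (n j : ℝ) * ⟪D.simple j, c⟫_ℝ := by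
  simp only [sum_inner, real_inner_smul_left]

lemma inner_sum_simple_nonneg (n : Fin D.r → ℕ) (hc : c ∈ D.Cbar) :
    0 ≤ ⟪∑ j, (n j : ℝ) • D.simple j, c⟫_ℝ := by
  rw [inner_sum_simple_eq]
  exact Finset.sum_nonneg fun j _ =>
    mul_nonneg (Nat.cast_nonneg _) (D.inner_mem_Icc_of_mem_Cbar (D.simple_mem_pos j) hc).1

lemma inner_sum_simple_eq_zero_iff (n : Fin D.r → ℕ) (hc : c ∈ D.CJ J) :
    ⟪∑ j, (n j : ℝ) • D.simple j, c⟫_ℝ = 0 ↔ ∀ j, n j ≠ 0 → j.succ ∈ J := by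
  rw [inner_sum_simple_eq, Finset.sum_eq_zero_iff_of_nonneg fun j _ =>
    mul_nonneg (Nat.cast_nonneg _) (D.inner_mem_Icc_of_mem_Cbar (D.simple_mem_pos j) hc.1).1]
  simp only [Finset.mem_univ, true_imp_iff, mul_eq_zero, Nat.cast_eq_zero,
    D.inner_simple_eq_zero_iff hc, or_iff_not_imp_left]

lemma inner_eq_one_iff (hα : α ∈ D.pos) (hc : c ∈ D.CJ J) :
    ⟪α, c⟫_ℝ = 1 ↔ 0 ∈ J ∧ ⟪D.hroot - α, c⟫_ℝ = 0 := by
  obtain ⟨n, hn⟩ := D.hroot_highest α (D.pos_subset hα)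
  have hle := (D.inner_mem_Icc_of_mem_Cbar D.hroot_mem_pos hc.1).2
  have hnn := D.inner_sum_simple_nonneg n hc.1
  rw [← hn, inner_sub_left] at hnn
  rw [← D.inner_hroot_eq_one_iff hc, inner_sub_left]
  constructor
  · intro h
    constructor <;> linarith
  · rintro ⟨h1, h0⟩
    linarith

lemma inner_eq_zero_iff_of_mem_CJ (hα : α ∈ D.pos) (hc : c ∈ D.CJ J) (hc' : c' ∈ D.CJ J) :
    ⟪α, c⟫_ℝ = 0 ↔ ⟪α, c'⟫_ℝ = 0 := by
  obtain ⟨n, rfl⟩ := D.pos_nat_comb α hα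
  rw [D.inner_sum_simple_eq_zero_iff n hc, D.inner_sum_simple_eq_zero_iff n hc']

lemma inner_eq_one_iff_of_mem_CJ (hα : α ∈ D.pos) (hc : c ∈ D.CJ J) (hc' : c' ∈ D.CJ J) :
    ⟪α, c⟫_ℝ = 1 ↔ ⟪α, c'⟫_ℝ = 1 := by
  obtain ⟨n, hn⟩ := D.hroot_highest α (D.pos_subset hα)
  rw [D.inner_eq_one_iff hα hc, D.inner_eq_one_iff hα hc', hn,
    D.inner_sum_simple_eq_zero_iff n hc, D.inner_sum_simple_eq_zero_iff n hc']

lemma face_trichotomy (hα : α ∈ D.pos) :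
    (∀ c ∈ D.CJ J, ⟪α, c⟫_ℝ = 0) ∨ (∀ c ∈ D.CJ J, ⟪α, c⟫_ℝ = 1) ∨
      ∀ c ∈ D.CJ J, 0 < ⟪α, c⟫_ℝ ∧ ⟪α, c⟫_ℝ < 1 := by
  rcases (D.CJ J).eq_empty_or_nonempty with hJ | ⟨c₀, hc₀⟩
  · simp [hJ]
  by_cases h0 : ⟪α, c₀⟫_ℝ = 0
  · exact Or.inl fun c hc => (D.inner_eq_zero_iff_of_mem_CJ hα hc₀ hc).mp h0
  by_cases h1 : ⟪α, c₀⟫_ℝ = 1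
  · exact Or.inr <| Or.inl fun c hc => (D.inner_eq_one_iff_of_mem_CJ hα hc₀ hc).mp h1
  refine Or.inr <| Or.inr fun c hc => ?_
  obtain ⟨hl, hu⟩ := D.inner_mem_Icc_of_mem_Cbar hα hc.1
  exact ⟨hl.lt_of_ne' fun h => h0 ((D.inner_eq_zero_iff_of_mem_CJ hα hc₀ hc).mpr h),
    hu.lt_of_ne fun h => h1 ((D.inner_eq_one_iff_of_mem_CJ hα hc₀ hc).mpr h)⟩

/-- `η` agrees with `η_J` on `Φ0+`. -/
structure IsEtaJ (J : Set (Fin (D.r + 1))) (η : E → ℤ) : Prop where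
  of_eq_zero : ∀ α ∈ D.pos, (∀ c ∈ D.CJ J, ⟪α, c⟫_ℝ = 0) → η α = -1
  of_eq_one : ∀ α ∈ D.pos, (∀ c ∈ D.CJ J, ⟪α, c⟫_ℝ = 1) → η α = 1
  of_mem_Ioo : ∀ α ∈ D.pos, (∀ c ∈ D.CJ J, 0 < ⟪α, c⟫_ℝ ∧ ⟪α, c⟫_ℝ < 1) → η α = 0

variable {D}

lemma IsEtaJ.eq_of_inner_eq {η : E → ℤ} (hη : D.IsEtaJ J η) (hα : α ∈ D.pos)
    (hβ : β ∈ D.pos) (h : ∀ c ∈ D.CJ J, ⟪β, c⟫_ℝ = ⟪α, c⟫_ℝ) : η β = η α := by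
  rcases D.face_trichotomy hα with h' | h' | h'
  · rw [hη.of_eq_zero β hβ fun c hc => (h c hc).trans (h' c hc), hη.of_eq_zero α hα h']
  · rw [hη.of_eq_one β hβ fun c hc => (h c hc).trans (h' c hc), hη.of_eq_one α hα h']
  · rw [hη.of_mem_Ioo β hβ fun c hc => h c hc ▸ h' c hc, hη.of_mem_Ioo α hα h']

lemma IsEtaJ.eq_neg_of_inner_eq_one_sub {η : E → ℤ} (hη : D.IsEtaJ J η) (hα : α ∈ D.pos)
    (hβ : β ∈ D.pos) (h : ∀ c ∈ D.CJ J, ⟪β, c⟫_ℝ = 1 - ⟪α, c⟫_ℝ) : η β = -η α := by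
  rcases D.face_trichotomy hα with h' | h' | h'
  · rw [hη.of_eq_one β hβ fun c hc => by rw [h c hc, h' c hc, sub_zero],
      hη.of_eq_zero α hα h', neg_neg]
  · rw [hη.of_eq_zero β hβ fun c hc => by rw [h c hc, h' c hc, sub_self],
      hη.of_eq_one α hα h']
  · rw [hη.of_mem_Ioo β hβ fun c hc => by have := h' c hc; constructor <;> linarith [h c hc],
      hη.of_mem_Ioo α hα h', neg_zero]

variable (D)

lemma apply_lrefl_of_W0_invariant {M : Type*} {k : E → M}
    (hk : ∀ α ∈ D.Φ0, ∀ w ∈ D.W0, k (w.linear α) = k α) (hγ : γ ∈ D.Φ0) (hβ : β ∈ D.Φ0) :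
    k (lrefl γ β) = k β :=
  hk β hβ _ (Subgroup.subset_closure ⟨γ, hγ, rfl⟩)

lemma apply_neg_of_W0_invariant {M : Type*} {k : E → M}
    (hk : ∀ α ∈ D.Φ0, ∀ w ∈ D.W0, k (w.linear α) = k α) (hβ : β ∈ D.Φ0) : k (-β) = k β := by
  rw [← lrefl_self (D.root_ne_zero β hβ), D.apply_lrefl_of_W0_invariant hk hβ hβ]

lemma lrefl_simple_mem_pos (i : Fin D.r) (hα : α ∈ D.pos) (hne : α ≠ D.simple i) :
    lrefl (D.simple i) α ∈ D.pos := by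
  have hαi := D.pos_subset (D.simple_mem_pos i)
  refine ((D.pos_dichotomy _ (D.lrefl_mem hαi (D.pos_subset hα))).resolve_right
    fun ⟨_, hneg⟩ => hne ?_).1
  obtain ⟨n, hn⟩ := D.pos_nat_comb α hα
  obtain ⟨n', hn'⟩ := D.pos_nat_comb _ hneg
  -- two nonnegative combinations of simple roots summing to a multiple of `α_i`
  have hsum : ∑ l, ((n l : ℝ) + n' l) • D.simple l = ⟪α, cv (D.simple i)⟫_ℝ • D.simple i := by
    simp only [add_smul, Finset.sum_add_distrib, ← hn, ← hn', lrefl_apply]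
    abel
  have hcoeff := congrFun (D.simple_indep.eq_single_of_sum_eq_smul hsum)
  have hzero : ∀ l ≠ i, n l = 0 := fun l hl => by
    have h := hcoeff l
    rw [Pi.single_eq_of_ne hl] at h
    have : n l + n' l = 0 := by exact_mod_cast h
    omega
  have hα_eq : α = (n i : ℝ) • D.simple i := by
    rw [hn, Finset.sum_eq_single i (fun l _ hl => by simp [hzero l hl]) (by simp)]
  rcases D.root_reduced _ hαi (n i) (hα_eq ▸ D.pos_subset hα) with h | h
  · rw [hα_eq, h, one_smul]
  · linarith [(n i).cast_nonneg (α := ℝ)]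

lemma inner_hroot_cv_simple_nonneg (i : Fin D.r) : 0 ≤ ⟪D.hroot, cv (D.simple i)⟫_ℝ := by
  obtain ⟨n, hn⟩ := D.hroot_highest _
    (D.lrefl_mem (D.pos_subset (D.simple_mem_pos i)) (D.pos_subset D.hroot_mem_pos))
  rw [lrefl_apply, sub_sub_cancel] at hn
  have h := congrFun (D.simple_indep.eq_single_of_sum_eq_smul hn.symm) i
  rw [Pi.single_eq_same] at h
  rw [← h]
  positivity

lemma isDom_hroot : D.IsDom D.hroot := fun α hα => by
  obtain ⟨n, rfl⟩ := D.pos_nat_comb α hα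
  rw [inner_sum_simple_eq]
  refine Finset.sum_nonneg fun j _ => mul_nonneg (Nat.cast_nonneg _) ?_
  have h := D.inner_hroot_cv_simple_nonneg j
  have hpos := real_inner_self_pos.mpr (D.root_ne_zero _ (D.pos_subset (D.simple_mem_pos j)))
  rw [inner_cv, le_div_iff₀ hpos, real_inner_comm (D.simple j) D.hroot] at h
  linarith

lemma inner_cv_hroot_eq_zero_or_one (hα : α ∈ D.pos) (hne : α ≠ D.hroot) :
    ⟪α, cv D.hroot⟫_ℝ = 0 ∨ ⟪α, cv D.hroot⟫_ℝ = 1 := by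
  have hφ := real_inner_self_pos.mpr (D.root_ne_zero _ (D.pos_subset D.hroot_mem_pos))
  obtain ⟨hle, heq⟩ := real_inner_le_inner_self_of_inner_self_le
    (D.hroot_long ▸ D.root_norm_le α (D.pos_subset hα))
  obtain ⟨n, hn⟩ := D.exists_inner_cv_eq_intCast (D.pos_subset hα) (D.pos_subset D.hroot_mem_pos)
  have h0 : (0 : ℝ) ≤ n := hn ▸ by
    have := D.isDom_hroot α hα
    rw [inner_cv]
    positivity
  -- equality `⟪α, φ⟫ = ⟪φ, φ⟫` would force `α = φ`, as `φ` is long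
  have h2 : (n : ℝ) < 2 := hn ▸ by
    rw [inner_cv, div_lt_iff₀ hφ]
    linarith [lt_of_le_of_ne hle fun h => hne (heq h)]
  have : n = 0 ∨ n = 1 := by
    have : 0 ≤ n := by exact_mod_cast h0
    have : n < 2 := by exact_mod_cast h2
    omega
  rcases this with rfl | rfl <;> simp [hn]

lemma hroot_sub_mem_pos (hα : α ∈ D.pos) (h : ⟪α, cv D.hroot⟫_ℝ = 1) :
    D.hroot - α ∈ D.pos := by
  have hφ := D.pos_subset D.hroot_mem_pos
  have hmem : D.hroot - α ∈ D.Φ0 := by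
    have := D.root_neg_mem _ (D.lrefl_mem hφ (D.pos_subset hα))
    rwa [lrefl_apply, h, one_smul, neg_sub] at this
  refine ((D.pos_dichotomy _ hmem).resolve_right fun ⟨_, hneg⟩ => ?_).1
  have hdom := D.isDom_hroot _ hneg
  have hφφ := real_inner_self_pos.mpr (D.root_ne_zero _ hφ)
  rw [inner_cv, div_eq_one_iff_eq hφφ.ne'] at h
  rw [neg_sub, inner_sub_left] at hdom
  linarith

variable {G : Type*} [CommGroup G] {k : E → G} {η : E → ℤ}

lemma prod_zpow_eta_mul_floor_inner_cv_simple
    (hk : ∀ α ∈ D.Φ0, ∀ w ∈ D.W0, k (w.linear α) = k α) (hη : D.IsEtaJ J η) {i : Fin D.r}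
    (hi : i.succ ∈ J) :
    ∏ α ∈ D.pos, k α ^ (η α * ⌊⟪α, cv (D.simple i)⟫_ℝ⌋) = k (D.simple i) ^ (-2 : ℤ) := by
  have hαi := D.pos_subset (D.simple_mem_pos i)
  have hne := D.root_ne_zero _ hαi
  have hvanish : ∀ c ∈ D.CJ J, ⟪D.simple i, c⟫_ℝ = 0 := fun c hc =>
    (D.inner_simple_eq_zero_iff hc i).mpr hi
  rw [← Finset.mul_prod_erase _ _ (D.simple_mem_pos i),
    hη.of_eq_zero _ (D.simple_mem_pos i) hvanish, inner_cv_self hne]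
  suffices ∏ α ∈ D.pos.erase (D.simple i),
      k α ^ (η α * ⌊⟪α, cv (D.simple i)⟫_ℝ⌋) = 1 by
    rw [this, mul_one]
    norm_num
  refine Finset.prod_involution (fun α _ => lrefl (D.simple i) α) (fun α hα => ?_)
    (fun α _ hα₁ hfix => hα₁ ?_) (fun α hα => ?_) (fun α _ => lrefl_lrefl _ α)
  · obtain ⟨hα_ne, hα⟩ := Finset.mem_erase.mp hα
    obtain ⟨n, hn⟩ := D.exists_inner_cv_eq_intCast (D.pos_subset hα) hαi
    rw [D.apply_lrefl_of_W0_invariant hk hαi (D.pos_subset hα),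
      hη.eq_of_inner_eq hα (D.lrefl_simple_mem_pos i hα hα_ne)
        fun c hc => inner_lrefl_of_inner_eq_zero α (hvanish c hc),
      inner_lrefl_cv hne, hn, ← Int.cast_neg, Int.floor_intCast, Int.floor_intCast, ← zpow_add,
      mul_neg, add_neg_cancel, zpow_zero]
  · have h := inner_lrefl_cv hne α
    rw [hfix, self_eq_neg] at h
    rw [h, Int.floor_zero, mul_zero, zpow_zero]
  · obtain ⟨hα_ne, hα⟩ := Finset.mem_erase.mp hα
    refine Finset.mem_erase.mpr ⟨fun h => ?_, D.lrefl_simple_mem_pos i hα hα_ne⟩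
    have hα_eq : α = -D.simple i := by rw [← lrefl_lrefl (D.simple i) α, h, lrefl_self hne]
    rcases D.pos_dichotomy _ hαi with h' | h'
    · exact h'.2 (hα_eq ▸ hα)
    · exact h'.1 (D.simple_mem_pos i)

lemma prod_zpow_eta_mul_floor_inner_cv_hroot
    (hk : ∀ α ∈ D.Φ0, ∀ w ∈ D.W0, k (w.linear α) = k α) (hη : D.IsEtaJ J η)
    (h0 : (0 : Fin (D.r + 1)) ∈ J) :
    ∏ α ∈ D.pos, k α ^ (η α * ⌊⟪α, cv D.hroot⟫_ℝ⌋) = k D.hroot ^ (2 : ℤ) := by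
  have hφ := D.pos_subset D.hroot_mem_pos
  have hne := D.root_ne_zero _ hφ
  have hφ_one : ∀ c ∈ D.CJ J, ⟪D.hroot, c⟫_ℝ = 1 := fun c hc =>
    (D.inner_hroot_eq_one_iff hc).mpr h0
  rw [← Finset.mul_prod_erase _ _ D.hroot_mem_pos,
    hη.of_eq_one _ D.hroot_mem_pos hφ_one, inner_cv_self hne]
  suffices ∏ α ∈ D.pos.erase D.hroot, k α ^ (η α * ⌊⟪α, cv D.hroot⟫_ℝ⌋) = 1 by
    rw [this, mul_one]
    norm_num
  rw [← Finset.prod_filter_of_ne (p := fun α => ⟪α, cv D.hroot⟫_ℝ = 1) fun α hα h =>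
    (D.inner_cv_hroot_eq_zero_or_one (Finset.mem_of_mem_erase hα)
      (Finset.ne_of_mem_erase hα)).resolve_left fun h' => h (by simp [h'])]
  have hmem : ∀ α ∈ (D.pos.erase D.hroot).filter (fun α => ⟪α, cv D.hroot⟫_ℝ = 1),
      α ∈ D.pos ∧ ⟪α, cv D.hroot⟫_ℝ = 1 := fun α hα => by
    simp only [Finset.mem_filter, Finset.mem_erase] at hα
    exact ⟨hα.1.2, hα.2⟩
  have hφ_sub : ∀ α, ⟪α, cv D.hroot⟫_ℝ = 1 → ⟪D.hroot - α, cv D.hroot⟫_ℝ = 1 := fun α h1 => by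
    rw [inner_sub_left, inner_cv_self hne, h1]
    norm_num
  refine Finset.prod_involution (fun α _ => D.hroot - α) (fun α hα => ?_)
    (fun α hα _ hfix => ?_) (fun α hα => ?_) (fun α _ => sub_sub_cancel _ α)
  · obtain ⟨hα, h1⟩ := hmem α hα
    have hβ := D.hroot_sub_mem_pos hα h1
    have hkβ : k (D.hroot - α) = k α := by
      have h := D.apply_neg_of_W0_invariant hk (D.lrefl_mem hφ (D.pos_subset hα))
      rwa [D.apply_lrefl_of_W0_invariant hk hφ (D.pos_subset hα), lrefl_apply, h1, one_smul,
        neg_sub] at h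
    have hηβ : η (D.hroot - α) = -η α :=
      hη.eq_neg_of_inner_eq_one_sub hα hβ fun c hc => by rw [inner_sub_left, hφ_one c hc]
    rw [hkβ, hηβ, hφ_sub α h1, h1, Int.floor_one, ← zpow_add, neg_mul, add_neg_cancel,
      zpow_zero]
  · obtain ⟨hα, -⟩ := hmem α hα
    rw [sub_eq_iff_eq_add, ← two_smul ℝ] at hfix
    rcases D.root_reduced α (D.pos_subset hα) 2 (hfix ▸ hφ) with h | h <;> norm_num at h
  · obtain ⟨hα, h1⟩ := hmem α hα
    simp only [Finset.mem_filter, Finset.mem_erase]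
    exact ⟨⟨by simpa using D.root_ne_zero α (D.pos_subset hα), D.hroot_sub_mem_pos hα h1⟩,
      hφ_sub α h1⟩

end Data

end SSV

theorem statement16_general
    {E : Type*} [NormedAddCommGroup E] [InnerProductSpace ℝ E]
    (D : SSV.Data E) {F : Type*} [Field F] (k : E → Fˣ)
    (hk : ∀ α ∈ D.Φ0, ∀ w ∈ D.W0, k (w.linear α) = k α)
    (J : Set (Fin (D.r + 1)))
    (ηJ : E → ℤ)
    (hη0 : ∀ α ∈ D.pos, (∀ c ∈ D.CJ J, ⟪α, c⟫_ℝ = 0) → ηJ α = -1)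
    (hη1 : ∀ α ∈ D.pos, (∀ c ∈ D.CJ J, ⟪α, c⟫_ℝ = 1) → ηJ α = 1)
    (hηm : ∀ α ∈ D.pos, (∀ c ∈ D.CJ J, 0 < ⟪α, c⟫_ℝ ∧ ⟪α, c⟫_ℝ < 1) → ηJ α = 0) :
    (∀ i : Fin D.r, i.succ ∈ J →
      ∏ α ∈ D.pos, k α ^ (ηJ α * ⌊⟪α, SSV.cv (D.simple i)⟫_ℝ⌋) =
        k (D.simple i) ^ (-2 : ℤ)) ∧
    ((0 : Fin (D.r + 1)) ∈ J →
      ∏ α ∈ D.pos, k α ^ (ηJ α * ⌊⟪α, SSV.cv D.hroot⟫_ℝ⌋) = k D.hroot ^ (2 : ℤ)) := by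
  have hη : D.IsEtaJ J ηJ := ⟨hη0, hη1, hηm⟩
  exact ⟨fun _ hi => D.prod_zpow_eta_mul_floor_inner_cv_simple hk hη hi,
    fun h0 => D.prod_zpow_eta_mul_floor_inner_cv_hroot hk hη h0⟩

/-- for a `W0`-invariant function `k : Φ0 → Fˣ` and `J ⊊ {0,…,r}`, with
`η_J : Φ0+ → {−1,0,1}` recording whether `α` is `≡ 0`, `≡ 1`, or valued in `(0,1)` on
`C^J`: for `i ∈ J ∩ {1,…,r}`, `∏_{α ∈ Φ0+} k(α)^{η_J(α)·α(α_i∨)} = k(α_i)^{−2}`;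
and if `0 ∈ J` then `∏_{α ∈ Φ0+} k(α)^{η_J(α)·α(φ∨)} = k(φ)²`. -/
theorem statement16
    {E : Type*} [NormedAddCommGroup E] [InnerProductSpace ℝ E] [FiniteDimensional ℝ E]
    (D : SSV.Data E) {F : Type*} [Field F] (k : E → Fˣ)
    (hk : ∀ α ∈ D.Φ0, ∀ w ∈ D.W0, k (w.linear α) = k α)
    (J : Set (Fin (D.r + 1))) (hJ : J ≠ Set.univ)
    (ηJ : E → ℤ)
    (hη0 : ∀ α ∈ D.pos, (∀ c ∈ D.CJ J, ⟪α, c⟫_ℝ = 0) → ηJ α = -1)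
    (hη1 : ∀ α ∈ D.pos, (∀ c ∈ D.CJ J, ⟪α, c⟫_ℝ = 1) → ηJ α = 1)
    (hηm : ∀ α ∈ D.pos, (∀ c ∈ D.CJ J, 0 < ⟪α, c⟫_ℝ ∧ ⟪α, c⟫_ℝ < 1) → ηJ α = 0) :
    (∀ i : Fin D.r, i.succ ∈ J →
      ∏ α ∈ D.pos, k α ^ (ηJ α * ⌊⟪α, SSV.cv (D.simple i)⟫_ℝ⌋) =
        k (D.simple i) ^ (-2 : ℤ)) ∧
    ((0 : Fin (D.r + 1)) ∈ J →
      ∏ α ∈ D.pos, k α ^ (ηJ α * ⌊⟪α, SSV.cv D.hroot⟫_ℝ⌋) = k D.hroot ^ (2 : ℤ)) :=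
  statement16_general D k hk J ηJ hη0 hη1 hηm
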